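/- arXiv:1811.02311 — 2 statements merged into one kernel-verified Lean document; each statement's English description precedes it below -/
import Mathlib

section
/- In a perfect REL-algebra, let a, b, c be atoms with a ≤ b;c. Then 1';a ≠ 0 if and only if 1';b ≠ 0, and in that case Sa = Sb. -/
class PerfectREL (α : Type*) [CompleteBooleanAlgebra α] [IsAtomic α] where
  comp : α → α → α
  conv : α → α
  id' : α
  ax2 : ∀ x y : α, conv (x ⊓ conv y) = conv x ⊓ y
  ax3l : ∀ x y z : α, comp (x ⊔ y) z = comp x z ⊔ comp y z
  ax3r : ∀ x y z : α, comp x (y ⊔ z) = comp x y ⊔ comp x z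
  ax4l : comp (⊤ : α) ⊥ = ⊥
  ax4r : comp (⊥ : α) ⊤ = ⊥
  ax5l : ∀ x y z : α, comp (conv x) y ⊓ z = comp (conv x) (y ⊓ comp (conv (conv x)) z) ⊓ z
  ax5r : ∀ x y z : α, comp x (conv y) ⊓ z = comp (x ⊓ comp z (conv (conv y))) (conv y) ⊓ z
  ax6l : ∀ x : α, comp id' x ≤ x
  ax6r : ∀ x : α, comp x id' ≤ x
  ax7 : comp (id' : α) id' = id'
  ax8 : comp ((conv (⊤ : α))ᶜ) ((conv (⊤ : α))ᶜ) ⊓ id' = ⊥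
  ax9a : ∀ x y z : α, comp (comp (x ⊓ id') y) z = comp (x ⊓ id') (comp y z)
  ax9b : ∀ x y z : α, comp (comp x (y ⊓ id')) z = comp x (comp (y ⊓ id') z)
  ax9c : ∀ x y z : α, comp (comp x y) (z ⊓ id') = comp x (comp y (z ⊓ id'))
  conv_sSup : ∀ S : Set α, conv (sSup S) = ⨆ x ∈ S, conv x
  comp_sSup_left : ∀ (S : Set α) (y : α), comp (sSup S) y = ⨆ x ∈ S, comp x y
  comp_sSup_right : ∀ (x : α) (S : Set α), comp x (sSup S) = ⨆ y ∈ S, comp x y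

open PerfectREL

variable {α : Type*} [CompleteBooleanAlgebra α] [IsAtomic α] [PerfectREL α]

lemma comp_bot_left' (y : α) : comp (⊥ : α) y = ⊥ := by
  have := comp_sSup_left (∅ : Set α) y
  simpa using this

lemma comp_mono_left' {x x' : α} (y : α) (h : x ≤ x') : comp x y ≤ comp x' y := by
  have h3 : comp (x ⊔ x') y = comp x y ⊔ comp x' y := ax3l x x' y
  rw [sup_eq_right.mpr h] at h3
  rw [h3]; exact le_sup_left

lemma comp_mono_right' (x : α) {y y' : α} (h : y ≤ y') : comp x y ≤ comp x y' := by
  have h3 : comp x (y ⊔ y') = comp x y ⊔ comp x y' := ax3r x y y'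
  rw [sup_eq_right.mpr h] at h3
  rw [h3]; exact le_sup_left

lemma sSup_atoms_le' (x : α) : sSup {a : α | IsAtom a ∧ a ≤ x} = x := by
  apply le_antisymm (sSup_le fun a ha => ha.2)
  by_contra hlt
  set s := sSup {a : α | IsAtom a ∧ a ≤ x} with hs
  have hne : x ⊓ sᶜ ≠ ⊥ := by
    intro hbo
    apply hlt
    have hx : x = x ⊓ s := by
      calc x = x ⊓ (s ⊔ sᶜ) := by rw [sup_compl_eq_top, inf_top_eq]
      _ = x ⊓ s ⊔ x ⊓ sᶜ := inf_sup_left x s sᶜ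
      _ = x ⊓ s := by rw [hbo, sup_bot_eq]
    exact hx.le.trans inf_le_right
  rcases (IsAtomic.eq_bot_or_exists_atom_le (x ⊓ sᶜ)).resolve_left hne with ⟨a, haAtom, hale⟩
  have h1 : a ≤ s := le_sSup ⟨haAtom, hale.trans inf_le_left⟩
  have h2 : a ≤ sᶜ := hale.trans inf_le_right
  exact haAtom.1 (le_bot_iff.mp (by simpa using le_inf h1 h2))

lemma atom_le_sSup' {a : α} (ha : IsAtom a) {S : Set α} (h : a ≤ sSup S) :
    ∃ s ∈ S, a ≤ s := by
  have heq : a = a ⊓ sSup S := (inf_eq_left.mpr h).symm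
  rw [inf_sSup_eq] at heq
  by_contra hcon
  push_neg at hcon
  have hb : ∀ s ∈ S, a ⊓ s = ⊥ := by
    intro s hs
    rcases ha.le_iff.mp (inf_le_left : a ⊓ s ≤ a) with h' | h'
    · exact h'
    · exact absurd (h'.symm.trans_le inf_le_right) (hcon s hs)
  exact ha.1 (by rw [heq]; exact le_bot_iff.mp (iSup₂_le fun s hs => (hb s hs).le))

/-- If `e` is a subidentity atom and `x` is an atom below `e;y`, then `e;x = x`. -/
lemma key_lemma {e x y : α} (hei : e ≤ id') (hx : IsAtom x)
    (hxy : x ≤ comp e y) : comp e x = x := by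
  have hy : comp e y = comp e (sSup {g : α | IsAtom g ∧ g ≤ y}) := by
    rw [sSup_atoms_le']
  rw [hy, comp_sSup_right] at hxy
  have hxy' : x ≤ sSup ((fun g => comp e g) '' {g : α | IsAtom g ∧ g ≤ y}) := by
    rwa [sSup_image]
  obtain ⟨s, hs, hxs⟩ := atom_le_sSup' hx hxy'
  obtain ⟨g, ⟨hgAtom, _⟩, rfl⟩ := hs
  have hge : comp e g ≤ g := (comp_mono_left' g hei).trans (ax6l g)
  have hxg : x ≤ g := hxs.trans hge
  have hxg' : x = g := (hgAtom.le_iff.mp hxg).resolve_left hx.1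
  subst hxg'
  exact le_antisymm ((comp_mono_left' x hei).trans (ax6l x)) hxs

/-- extraction: if `id';z ≠ ⊥` for an atom `z`, there is a subidentity atom fixing `z`. -/
lemma extract_lemma {z : α} (hz : IsAtom z) (h : comp id' z ≠ ⊥) :
    ∃ e : α, IsAtom e ∧ e ≤ id' ∧ comp e z = z := by
  have hid : comp id' z = ⨆ f ∈ {f : α | IsAtom f ∧ f ≤ id'}, comp f z := by
    conv_lhs => rw [← sSup_atoms_le' (id' : α)]
    exact comp_sSup_left _ z
  have hne : ∃ f ∈ {f : α | IsAtom f ∧ f ≤ id'}, comp f z ≠ ⊥ := by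
    by_contra hcon
    push_neg at hcon
    exact h (by rw [hid]; exact le_bot_iff.mp (iSup₂_le fun f hf => (hcon f hf).le))
  obtain ⟨f, ⟨hfAtom, hfi⟩, hfz⟩ := hne
  refine ⟨f, hfAtom, hfi, ?_⟩
  have hfz' : comp f z ≤ z := (comp_mono_left' z hfi).trans (ax6l z)
  exact (hz.le_iff.mp hfz').resolve_left hfz

theorem S_compat (a b c : α) (ha : IsAtom a) (hb : IsAtom b) (hc : IsAtom c)
    (h : a ≤ comp b c) :
    (comp id' a ≠ (⊥ : α) ↔ comp id' b ≠ (⊥ : α)) ∧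
      ∀ sa sb : α, IsAtom sa → sa ≤ id' → comp sa a = a →
        IsAtom sb → sb ≤ id' → comp sb b = b → sa = sb := by
  -- general fact: any subidentity atom fixing b also fixes a
  have main : ∀ e : α, e ≤ id' → comp e b = b → comp e a = a := by
    intro e hei heb
    have h9 : comp (comp e b) c = comp e (comp b c) := by
      have := ax9a e b c
      rwa [inf_eq_left.mpr hei] at this
    have ha' : a ≤ comp e (comp b c) := by rw [← h9, heb]; exact h
    exact key_lemma hei ha ha'
  constructor
  · constructor
    · intro h1
      obtain ⟨e, heA, hei, hea⟩ := extract_lemma ha h1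
      intro hbbot
      have h2 : comp e b = ⊥ :=
        le_bot_iff.mp ((comp_mono_left' b hei).trans hbbot.le)
      have h9 : comp (comp e b) c = comp e (comp b c) := by
        have := ax9a e b c
        rwa [inf_eq_left.mpr hei] at this
      have h3 : a ≤ comp (comp e b) c := by
        rw [h9]
        calc a = comp e a := hea.symm
        _ ≤ comp e (comp b c) := comp_mono_right' e h
      rw [h2, comp_bot_left'] at h3
      exact ha.1 (le_bot_iff.mp h3)
    · intro h1 hbot
      obtain ⟨e, heA, hei, heb⟩ := extract_lemma hb h1
      have hea : comp e a = a := main e hei heb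
      have : a ≤ comp id' a := by
        calc a = comp e a := hea.symm
        _ ≤ comp id' a := comp_mono_left' a hei
      exact ha.1 (le_bot_iff.mp (this.trans hbot.le))
  · intro sa sb hsaA hsai hsaa hsbA hsbi hsbb
    have hsba : comp sb a = a := main sb hsbi hsbb
    by_contra hne
    have hd : sa ⊓ sb = ⊥ := by
      rcases hsaA.le_iff.mp (inf_le_left : sa ⊓ sb ≤ sa) with h' | h'
      · exact h'
      · exact absurd ((hsbA.le_iff.mp (h' ▸ (inf_le_right : sa ⊓ sb ≤ sb))).resolve_left
          hsaA.1) hne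
    have h1 : comp sa sb ≤ sa := (comp_mono_right' sa hsbi).trans (ax6r sa)
    have h2 : comp sa sb ≤ sb := (comp_mono_left' sb hsai).trans (ax6l sb)
    have h3 : comp sa sb = ⊥ := le_bot_iff.mp (hd ▸ le_inf h1 h2)
    have h9 : comp (comp sa sb) a = comp sa (comp sb a) := by
      have := ax9a sa sb a
      rwa [inf_eq_left.mpr hsai] at this
    have : a = ⊥ := by
      calc a = comp sa a := hsaa.symm
      _ = comp sa (comp sb a) := by rw [hsba]
      _ = comp (comp sa sb) a := h9.symm
      _ = ⊥ := by rw [h3, comp_bot_left']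
    exact ha.1 this
end

section
/- In a perfect REL-algebra, let a, b, c be atoms with a ≤ b;c and b⌣ ≠ 0. Then c ≤ (b⌣);a. -/
open PerfectREL

variable {α : Type*} [CompleteBooleanAlgebra α] [IsAtomic α] [PerfectREL α]


lemma conv_bot' : conv (⊥ : α) = ⊥ := by
  have := conv_sSup (∅ : Set α)
  simpa using this

lemma comp_bot' (x : α) : comp x (⊥ : α) = ⊥ := by
  have := comp_sSup_right x (∅ : Set α)
  simpa using this

lemma conv_le_conv_top (x : α) : conv x ≤ conv (⊤ : α) := by
  have h := conv_sSup ({x, ⊤} : Set α)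
  rw [sSup_pair, iSup_pair, sup_top_eq] at h
  rw [h]
  exact le_sup_left

lemma conv_conv' (y : α) : conv (conv y) = conv (⊤ : α) ⊓ y := by
  have := ax2 (⊤ : α) y
  simpa using this

lemma conv_conv_conv (y : α) : conv (conv (conv y)) = conv y := by
  rw [conv_conv']
  exact inf_eq_right.mpr (conv_le_conv_top y)

lemma conv_conv_atom {b : α} (hb : IsAtom b) (hbc : conv b ≠ (⊥ : α)) :
    conv (conv b) = b := by
  have hle : conv (conv b) ≤ b := by rw [conv_conv']; exact inf_le_right
  rcases hb.le_iff.mp hle with h | h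
  · exfalso
    apply hbc
    have := conv_conv_conv b
    rw [h, conv_bot'] at this
    exact this.symm
  · exact h

theorem cycle_rotate_left (a b c : α) (ha : IsAtom a) (hb : IsAtom b) (hc : IsAtom c)
    (h : a ≤ comp b c) (hbc : conv b ≠ (⊥ : α)) :
    c ≤ comp (conv b) a := by
  have key := ax5l (conv b) c a
  rw [conv_conv_atom hb hbc] at key
  have hl : comp b c ⊓ a = a := inf_eq_right.mpr h
  rw [hl] at key
  have hne : c ⊓ comp (conv b) a ≠ ⊥ := by
    intro h0
    rw [h0, comp_bot'] at key
    exact ha.1 (by simpa using key)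
  rcases hc.le_iff.mp (inf_le_left : c ⊓ comp (conv b) a ≤ c) with h0 | h0
  · exact absurd h0 hne
  · exact inf_eq_left.mp h0
end
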